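/- arXiv:2602.03758 — 9 statements merged into one kernel-verified Lean document; each statement's English description precedes it below -/
import Mathlib

section
/- Let S be a discrete semigroup and let s ∈ S be left cancellable in S (i.e., s·x = s·y implies x = y for x, y ∈ S). Then s is left cancellable as an element of βS: for all p, q ∈ βS, s·p = s·q implies p = q. The analogous statement holds for right cancellable elements. -/
attribute [local instance] Ultrafilter.mul

theorem aux_map_inj {S T : Type*} {f : S → T} (hf : Function.Injective f)
    {p q : Ultrafilter S} (h : Ultrafilter.map f p = Ultrafilter.map f q) : p = q := by
  ext A
  constructor <;> intro hA
  · have : f '' A ∈ Ultrafilter.map f p := by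
      rw [Ultrafilter.mem_map]
      exact Filter.mem_of_superset hA (fun x hx => Set.mem_image_of_mem f hx)
    rw [h, Ultrafilter.mem_map] at this
    rwa [Set.preimage_image_eq A hf] at this
  · have : f '' A ∈ Ultrafilter.map f q := by
      rw [Ultrafilter.mem_map]
      exact Filter.mem_of_superset hA (fun x hx => Set.mem_image_of_mem f hx)
    rw [← h, Ultrafilter.mem_map] at this
    rwa [Set.preimage_image_eq A hf] at this

theorem pure_mul_eq {S : Type*} [Semigroup S] (s : S) (p : Ultrafilter S) :
    (pure s : Ultrafilter S) * p = Ultrafilter.map (s * ·) p := by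
  ext A
  show (∀ᶠ m in (pure s : Ultrafilter S), ∀ᶠ m' in p, m * m' ∈ A) ↔ _
  simp [Ultrafilter.mem_map]
  rfl

theorem mul_pure_eq {S : Type*} [Semigroup S] (s : S) (p : Ultrafilter S) :
    p * (pure s : Ultrafilter S) = Ultrafilter.map (· * s) p := by
  ext A
  show (∀ᶠ m in p, ∀ᶠ m' in (pure s : Ultrafilter S), m * m' ∈ A) ↔ _
  simp [Ultrafilter.mem_map]
  rfl

/-- A left (resp. right) cancellable element of a discrete semigroup `S` remains left
(resp. right) cancellable in the Stone–Čech compactification `βS`. -/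
theorem stmt_1 {S : Type*} [Semigroup S] :
    (∀ s : S, (∀ x y : S, s * x = s * y → x = y) →
      ∀ p q : Ultrafilter S, (pure s : Ultrafilter S) * p = (pure s : Ultrafilter S) * q → p = q) ∧
    (∀ s : S, (∀ x y : S, x * s = y * s → x = y) →
      ∀ p q : Ultrafilter S, p * (pure s : Ultrafilter S) = q * (pure s : Ultrafilter S) → p = q) := by
  constructor
  · intro s hs p q h
    rw [pure_mul_eq, pure_mul_eq] at h
    exact aux_map_inj (fun x y hxy => hs x y hxy) h
  · intro s hs p q h
    rw [mul_pure_eq, mul_pure_eq] at h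
    exact aux_map_inj (fun x y hxy => hs x y hxy) h
end

section
/- Let (S,+) be a semigroup and p ∈ βS. The following are equivalent: (a) p belongs to the smallest two-sided ideal K(βS) of βS; (b) for every A ∈ p, the set {x ∈ S : -x+A ∈ p} is syndetic in S; (c) for every q ∈ βS, p ∈ βS + q + p. -/
attribute [local instance] Ultrafilter.add

/-- `B` is syndetic in the semigroup `(S,+)`: finitely many translates of `B` cover `S`. -/
def SyndeticSet {S : Type*} [AddSemigroup S] (B : Set S) : Prop :=
  ∃ F : Finset S, ∀ s : S, ∃ t ∈ F, t + s ∈ B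

/-- `I` is a two-sided ideal of the semigroup `βS = Ultrafilter S`. -/
def IsIdealUF {S : Type*} [AddSemigroup S] (I : Set (Ultrafilter S)) : Prop :=
  I.Nonempty ∧ ∀ p ∈ I, ∀ q : Ultrafilter S, q + p ∈ I ∧ p + q ∈ I

section Aux

variable {S : Type*} [AddSemigroup S]

theorem uf_add_assoc (a b c : Ultrafilter S) : a + b + c = a + (b + c) :=
  @add_assoc _ Ultrafilter.addSemigroup a b c

theorem uf_mem_add {A : Set S} {U V : Ultrafilter S} :
    A ∈ U + V ↔ {x : S | {y : S | x + y ∈ A} ∈ V} ∈ U := Iff.rfl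

theorem uf_mem_pure_add {A : Set S} {t : S} {V : Ultrafilter S} :
    A ∈ (pure t : Ultrafilter S) + V ↔ {y : S | t + y ∈ A} ∈ V := by
  simp only [uf_mem_add, Ultrafilter.mem_pure, Set.mem_setOf_eq]

/-- Left ideals of `βS`. -/
def LeftIdealUF (I : Set (Ultrafilter S)) : Prop :=
  I.Nonempty ∧ ∀ p ∈ I, ∀ q : Ultrafilter S, q + p ∈ I

theorem leftIdeal_range_add (x : Ultrafilter S) :
    LeftIdealUF (Set.range (· + x)) := by
  refine ⟨⟨x + x, x, rfl⟩, ?_⟩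
  rintro p ⟨r, rfl⟩ q
  exact ⟨q + r, show q + r + x = q + (r + x) from uf_add_assoc q r x⟩

theorem isClosed_range_add (x : Ultrafilter S) :
    IsClosed (Set.range (· + x)) :=
  (isCompact_range (Ultrafilter.continuous_add_left x)).isClosed

/-- There exists a minimal left ideal of `βS` (minimal among all left ideals). -/
theorem exists_minimal_leftIdeal (p₀ : Ultrafilter S) :
    ∃ L : Set (Ultrafilter S), LeftIdealUF L ∧
      ∀ J : Set (Ultrafilter S), LeftIdealUF J → J ⊆ L → L ⊆ J := by
  set C : Set (Set (Ultrafilter S)) := {L | IsClosed L ∧ LeftIdealUF L} with hC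
  have hzorn : ∃ m, m ⊆ Set.univ ∧ Minimal (· ∈ C) m := by
    refine zorn_superset_nonempty C ?_ Set.univ
      ⟨isClosed_univ, ⟨p₀, trivial⟩, fun _ _ _ => trivial⟩
    intro c hcC hchain hcne
    refine ⟨⋂₀ c, ⟨isClosed_sInter fun L hL => (hcC hL).1, ?_, ?_⟩, fun s hs => Set.sInter_subset_of_mem hs⟩
    · haveI : Nonempty c := hcne.to_subtype
      have hdir : DirectedOn (· ⊇ ·) c := by
        intro a ha b hb
        rcases eq_or_ne a b with rfl | hne
        · exact ⟨a, ha, subset_rfl, subset_rfl⟩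
        · rcases hchain ha hb hne with h | h
          · exact ⟨a, ha, subset_rfl, h⟩
          · exact ⟨b, hb, h, subset_rfl⟩
      exact IsCompact.nonempty_sInter_of_directed_nonempty_isCompact_isClosed
        hdir (fun L hL => (hcC hL).2.1)
        (fun L hL => (hcC hL).1.isCompact) (fun L hL => (hcC hL).1)
    · intro p hp q
      exact Set.mem_sInter.mpr fun L hL => (hcC hL).2.2 p (Set.mem_sInter.mp hp L hL) q
  obtain ⟨L, -, hLC, hLmin⟩ := hzorn
  refine ⟨L, hLC.2, ?_⟩
  intro J hJ hJL
  obtain ⟨x, hx⟩ := hJ.1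
  have hR : Set.range (· + x) ⊆ J := by
    rintro _ ⟨r, rfl⟩; exact hJ.2 x hx r
  have hRC : Set.range (· + x) ∈ C := ⟨isClosed_range_add x, leftIdeal_range_add x⟩
  have := hLmin hRC (hR.trans hJL)
  exact this.trans hR

/-- Any element of the smallest two-sided ideal lies in a minimal left ideal. -/
theorem mem_minimal_leftIdeal {K : Set (Ultrafilter S)} (hK : IsIdealUF K)
    (hKmin : ∀ I : Set (Ultrafilter S), IsIdealUF I → K ⊆ I)
    {p : Ultrafilter S} (hp : p ∈ K) :
    ∃ M : Set (Ultrafilter S), p ∈ M ∧ LeftIdealUF M ∧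
      ∀ J : Set (Ultrafilter S), LeftIdealUF J → J ⊆ M → M ⊆ J := by
  obtain ⟨L, hL, hLmin⟩ := exists_minimal_leftIdeal (S := S) p
  set I₀ : Set (Ultrafilter S) := L ∪ {z | ∃ x ∈ L, ∃ b : Ultrafilter S, z = x + b} with hI₀
  have hIdeal : IsIdealUF I₀ := by
    refine ⟨hL.1.mono Set.subset_union_left, ?_⟩
    rintro z (hz | ⟨x, hx, b, rfl⟩) q
    · exact ⟨Or.inl (hL.2 z hz q), Or.inr ⟨z, hz, q, rfl⟩⟩
    · constructor
      · exact Or.inr ⟨q + x, hL.2 x hx q, b, (uf_add_assoc q x b).symm⟩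
      · exact Or.inr ⟨x, hx, b + q, uf_add_assoc x b q⟩
  rcases hKmin I₀ hIdeal hp with hpL | ⟨x, hx, b, rfl⟩
  · exact ⟨L, hpL, hL, hLmin⟩
  · refine ⟨(· + b) '' L, ⟨x, hx, rfl⟩, ⟨hL.1.image _, ?_⟩, ?_⟩
    · rintro _ ⟨y, hy, rfl⟩ q
      exact ⟨q + y, hL.2 y hy q, show q + y + b = q + (y + b) from uf_add_assoc q y b⟩
    · intro J hJ hJM
      have hJ' : LeftIdealUF {y | y ∈ L ∧ y + b ∈ J} := by
        constructor
        · obtain ⟨z, hz⟩ := hJ.1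
          obtain ⟨y, hy, rfl⟩ := hJM hz
          exact ⟨y, hy, hz⟩
        · rintro y ⟨hyL, hyJ⟩ q
          refine ⟨hL.2 y hyL q, ?_⟩
          rw [uf_add_assoc]
          exact hJ.2 _ hyJ q
      have := hLmin _ hJ' (fun y hy => hy.1)
      rintro _ ⟨y, hy, rfl⟩
      exact (this hy).2

theorem a_implies_c {K : Set (Ultrafilter S)} (hK : IsIdealUF K)
    (hKmin : ∀ I : Set (Ultrafilter S), IsIdealUF I → K ⊆ I)
    {p : Ultrafilter S} (hp : p ∈ K) (q : Ultrafilter S) :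
    ∃ r : Ultrafilter S, p = r + q + p := by
  obtain ⟨M, hpM, hM, hMmin⟩ := mem_minimal_leftIdeal hK hKmin hp
  have hsub : Set.range (· + (q + p)) ⊆ M := by
    rintro _ ⟨r, rfl⟩
    exact hM.2 _ (hM.2 p hpM q) r
  obtain ⟨r, hr⟩ := hMmin _ (leftIdeal_range_add (q + p)) hsub hpM
  exact ⟨r, by rw [uf_add_assoc]; exact hr.symm⟩

theorem a_implies_b {K : Set (Ultrafilter S)} (hK : IsIdealUF K)
    (hKmin : ∀ I : Set (Ultrafilter S), IsIdealUF I → K ⊆ I)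
    {p : Ultrafilter S} (hp : p ∈ K) {A : Set S} (hA : A ∈ p) :
    SyndeticSet {x : S | {y : S | x + y ∈ A} ∈ p} := by
  obtain ⟨M, hpM, hM, hMmin⟩ := mem_minimal_leftIdeal hK hKmin hp
  -- M is contained in the compact set `βS + p`, and conversely
  have hMrange : M ⊆ Set.range (· + p) :=
    hMmin _ (leftIdeal_range_add p) (by rintro _ ⟨r, rfl⟩; exact hM.2 p hpM r)
  -- every point of M is "below" p : p ∈ βS + m for all m ∈ M
  have hcover : M ⊆ ⋃ x : S, {u : Ultrafilter S | {y : S | x + y ∈ A} ∈ u} := by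
    intro m hm
    have hsub : Set.range (· + m) ⊆ M := by
      rintro _ ⟨r, rfl⟩; exact hM.2 m hm r
    obtain ⟨r, hr⟩ := hMmin _ (leftIdeal_range_add m) hsub hpM
    have hAr : A ∈ r + m := by rw [show r + m = p from hr]; exact hA
    rw [uf_mem_add] at hAr
    obtain ⟨x, hx⟩ := Ultrafilter.nonempty_of_mem hAr
    exact Set.mem_iUnion.mpr ⟨x, hx⟩
  have hMc : IsCompact (Set.range (· + p)) :=
    isCompact_range (Ultrafilter.continuous_add_left p)
  obtain ⟨F, hF⟩ := hMc.elim_finite_subcover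
    (fun x : S => {u : Ultrafilter S | {y : S | x + y ∈ A} ∈ u})
    (fun x => ultrafilter_isOpen_basic _)
    (by
      intro m hm
      have hmM : m ∈ M := by
        obtain ⟨r, rfl⟩ := hm
        exact hM.2 p hpM r
      exact hcover hmM)
  refine ⟨F, fun s => ?_⟩
  have hmem : (pure s : Ultrafilter S) + p ∈ Set.range (· + p) := ⟨pure s, rfl⟩
  obtain ⟨t, htF, ht⟩ := Set.mem_iUnion₂.mp (hF hmem)
  rw [Set.mem_setOf_eq, uf_mem_pure_add] at ht
  refine ⟨t, htF, ?_⟩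
  show {y : S | t + s + y ∈ A} ∈ p
  have : {y : S | t + s + y ∈ A} = {y : S | t + (s + y) ∈ A} := by
    ext y; simp [add_assoc]
  rw [this]
  exact ht

theorem b_implies_c {p : Ultrafilter S}
    (hb : ∀ A : Set S, A ∈ p → SyndeticSet {x : S | {y : S | x + y ∈ A} ∈ p})
    (q : Ultrafilter S) : ∃ r : Ultrafilter S, p = r + q + p := by
  set T : Set (Ultrafilter S) := Set.range (· + (q + p)) with hT
  have hTc : IsClosed T := isClosed_range_add (q + p)
  have hpT : p ∈ T := by
    rw [← hTc.closure_eq]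
    rw [mem_closure_iff]
    intro o ho hpo
    obtain ⟨v, ⟨A, rfl⟩, hpv, hvo⟩ :=
      ultrafilterBasis_is_basis.exists_subset_of_mem_open hpo ho
    have hA : A ∈ p := hpv
    obtain ⟨F, hF⟩ := hb A hA
    -- some translate set belongs to q
    have hcov : (⋃ t ∈ (F : Set S), {s : S | t + s ∈ {x : S | {y : S | x + y ∈ A} ∈ p}}) ∈ q := by
      have : (⋃ t ∈ (F : Set S), {s : S | t + s ∈ {x : S | {y : S | x + y ∈ A} ∈ p}}) = Set.univ := by
        ext s
        simp only [Set.mem_iUnion, Set.mem_univ, iff_true, Set.mem_setOf_eq]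
        obtain ⟨t, htF, ht⟩ := hF s
        exact ⟨t, htF, ht⟩
      rw [this]; exact Filter.univ_mem
    obtain ⟨t, htF, ht⟩ := (Ultrafilter.finite_biUnion_mem_iff F.finite_toSet).mp hcov
    refine ⟨(pure t : Ultrafilter S) + (q + p), hvo ?_, pure t, rfl⟩
    show A ∈ (pure t : Ultrafilter S) + (q + p)
    rw [uf_mem_pure_add, uf_mem_add]
    refine Filter.mem_of_superset ht ?_
    intro z hz
    have hz' : {y : S | t + z + y ∈ A} ∈ p := hz
    have : {y : S | t + z + y ∈ A} = {y : S | t + (z + y) ∈ A} := by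
      ext y; simp [add_assoc]
    rw [this] at hz'
    exact hz'
  obtain ⟨r, hr⟩ := hpT
  exact ⟨r, by rw [uf_add_assoc]; exact hr.symm⟩

theorem c_implies_a {K : Set (Ultrafilter S)} (hK : IsIdealUF K)
    {p : Ultrafilter S}
    (hc : ∀ q : Ultrafilter S, ∃ r : Ultrafilter S, p = r + q + p) : p ∈ K := by
  obtain ⟨q₀, hq₀⟩ := hK.1
  obtain ⟨r, hr⟩ := hc q₀
  have h1 : r + q₀ ∈ K := (hK.2 q₀ hq₀ r).1
  have h2 : r + q₀ + p ∈ K := (hK.2 _ h1 p).2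
  rwa [← hr] at h2

end Aux

/-- Characterizations of membership in the smallest ideal `K(βS)`:
`p ∈ K(βS)` iff for every `A ∈ p` the set `{x : -x+A ∈ p}` is syndetic, iff
`p ∈ βS + q + p` for every `q ∈ βS`. -/
theorem stmt_2 {S : Type*} [AddSemigroup S] (K : Set (Ultrafilter S))
    (hK : IsIdealUF K) (hKmin : ∀ I : Set (Ultrafilter S), IsIdealUF I → K ⊆ I)
    (p : Ultrafilter S) :
    (p ∈ K ↔ ∀ A : Set S, A ∈ p → SyndeticSet {x : S | {y : S | x + y ∈ A} ∈ p}) ∧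
    (p ∈ K ↔ ∀ q : Ultrafilter S, ∃ r : Ultrafilter S, p = r + q + p) := by
  constructor
  · constructor
    · intro hp A hA
      exact a_implies_b hK hKmin hp hA
    · intro hb
      exact c_implies_a hK (b_implies_c hb)
  · constructor
    · intro hp q
      exact a_implies_c hK hKmin hp q
    · intro hc
      exact c_implies_a hK hc
end

section
/- Let R be a large ideal domain (LID), let A ⊆ R be piecewise syndetic in the additive semigroup (R,+), and let r ∈ R with r ≠ 0. Then rA = {ra : a ∈ A} is piecewise syndetic in (R,+). -/
/-- `A` is piecewise syndetic in the commutative semigroup `(S,+)`. -/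
def PiecewiseSyndetic {S : Type*} [AddCommSemigroup S] (A : Set S) : Prop :=
  ∃ G : Finset S, ∀ F : Finset S, ∃ x : S, ∀ f ∈ F, ∃ t ∈ G, t + (f + x) ∈ A

/-- In a large ideal domain (an infinite integral domain in which every nonzero ideal has
finite additive index), nonzero dilates of piecewise syndetic sets are piecewise syndetic. -/
theorem stmt_5 {R : Type*} [CommRing R] [IsDomain R] [Infinite R]
    (hLID : ∀ I : Ideal R, I ≠ ⊥ → (I.toAddSubgroup).index ≠ 0)
    (A : Set R) (hA : PiecewiseSyndetic A) (r : R) (hr : r ≠ 0) :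
    PiecewiseSyndetic ((r * ·) '' A) := by
  classical
  obtain ⟨G, hG⟩ := hA
  set H := (Ideal.span ({r} : Set R)).toAddSubgroup with hHdef
  have hne : Ideal.span ({r} : Set R) ≠ ⊥ := by
    simpa [Ideal.span_singleton_eq_bot] using hr
  have hfin : Finite (R ⧸ H) := by
    have h := hLID _ hne
    rw [AddSubgroup.index] at h
    exact (Nat.card_ne_zero.mp h).2
  haveI := Fintype.ofFinite (R ⧸ H)
  have key : ∀ f : R, ∃ a : R,
      f = r * a + Quotient.out ((QuotientAddGroup.mk f : R ⧸ H)) := by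
    intro f
    have h1 : ((Quotient.out ((QuotientAddGroup.mk f : R ⧸ H)) : R) : R ⧸ H)
        = (QuotientAddGroup.mk f : R ⧸ H) := QuotientAddGroup.out_eq' _
    have h2 : f - Quotient.out ((QuotientAddGroup.mk f : R ⧸ H)) ∈ H := by
      rw [← QuotientAddGroup.eq_iff_sub_mem]
      exact h1.symm
    rw [hHdef] at h2
    have h3 : f - Quotient.out ((QuotientAddGroup.mk f : R ⧸ H))
        ∈ Ideal.span ({r} : Set R) := h2
    rw [Ideal.mem_span_singleton'] at h3
    obtain ⟨a, ha⟩ := h3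
    exact ⟨a, by linear_combination -ha⟩
  set g : R → R := fun f => Classical.choose (key f) with hg
  refine ⟨(G ×ˢ (Finset.univ : Finset (R ⧸ H))).image
    (fun p => r * p.1 + -(Quotient.out p.2)), fun F => ?_⟩
  obtain ⟨x', hx'⟩ := hG (F.image g)
  refine ⟨r * x', fun f hf => ?_⟩
  obtain ⟨t, htG, htA⟩ := hx' (g f) (Finset.mem_image_of_mem g hf)
  refine ⟨r * t + -(Quotient.out ((QuotientAddGroup.mk f : R ⧸ H))), ?_, ?_⟩
  · exact Finset.mem_image.2 ⟨(t, (QuotientAddGroup.mk f : R ⧸ H)),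
      Finset.mem_product.2 ⟨htG, Finset.mem_univ _⟩, rfl⟩
  · have hf' : f = r * g f + Quotient.out ((QuotientAddGroup.mk f : R ⧸ H)) :=
      Classical.choose_spec (key f)
    refine ⟨t + (g f + x'), htA, ?_⟩
    simp only
    linear_combination -hf'
end

section
/- Let R be a large ideal domain, let A ⊆ R be piecewise syndetic in (R,+), and suppose A ⊆ yR for some nonzero y ∈ R. Then A/y = {x ∈ R : yx ∈ A} is piecewise syndetic in (R,+). -/
/-- In a large ideal domain, if `A` is piecewise syndetic and `A ⊆ yR` for a nonzero `y`,
then `A/y = {x : yx ∈ A}` is piecewise syndetic. -/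
theorem stmt_6 {R : Type*} [CommRing R] [IsDomain R] [Infinite R]
    (hLID : ∀ I : Ideal R, I ≠ ⊥ → (I.toAddSubgroup).index ≠ 0)
    (A : Set R) (hA : PiecewiseSyndetic A) (y : R) (hy : y ≠ 0)
    (hAy : A ⊆ Set.range (y * ·)) :
    PiecewiseSyndetic {x : R | y * x ∈ A} := by
  classical
  obtain ⟨G, hG⟩ := hA
  set I : Ideal R := Ideal.span {y} with hIdef
  have hI : I ≠ ⊥ := by simp [hIdef, Ideal.span_singleton_eq_bot, hy]
  have hidx := hLID I hI
  set H : AddSubgroup R := I.toAddSubgroup with hHdef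
  haveI : Finite (R ⧸ H) := Nat.finite_of_card_ne_zero hidx
  haveI := Fintype.ofFinite (R ⧸ H)
  let D : Finset R := Finset.univ.image (fun q : R ⧸ H => Quotient.out q)
  let dv : R → R := fun a => if h : ∃ u, a = y * u then h.choose else 0
  refine ⟨(G ×ˢ D).image (fun p => dv (p.1 + p.2)), fun F => ?_⟩
  obtain ⟨x, hx⟩ := hG (F.image (fun f => y * f))
  obtain ⟨d, hd, x', hx'⟩ : ∃ d ∈ D, ∃ x', x = d + y * x' := by
    refine ⟨Quotient.out (QuotientAddGroup.mk x : R ⧸ H),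
      Finset.mem_image_of_mem _ (Finset.mem_univ _), ?_⟩
    have h1 : (QuotientAddGroup.mk (Quotient.out (QuotientAddGroup.mk x : R ⧸ H)) : R ⧸ H)
        = QuotientAddGroup.mk x := Quotient.out_eq _
    have h2 : -(Quotient.out (QuotientAddGroup.mk x : R ⧸ H)) + x ∈ H :=
      QuotientAddGroup.eq.mp h1
    have h3 : y ∣ -(Quotient.out (QuotientAddGroup.mk x : R ⧸ H)) + x := by
      rwa [hHdef, Submodule.mem_toAddSubgroup, hIdef, Ideal.mem_span_singleton] at h2
    obtain ⟨u, hu⟩ := h3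
    exact ⟨u, by linear_combination hu⟩
  refine ⟨x', fun f hf => ?_⟩
  obtain ⟨t, ht, htA⟩ := hx (y * f) (Finset.mem_image_of_mem _ hf)
  obtain ⟨s, hs⟩ := hAy htA
  have hdvd : ∃ u, t + d = y * u := by
    refine ⟨s - f - x', ?_⟩
    simp only at hs
    rw [hx'] at hs
    linear_combination - hs
  have hdv : y * dv (t + d) = t + d := by
    simp only [dv, dif_pos hdvd]
    exact hdvd.choose_spec.symm
  refine ⟨dv (t + d), Finset.mem_image.mpr ⟨(t, d), Finset.mem_product.mpr ⟨ht, hd⟩, rfl⟩, ?_⟩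
  show y * (dv (t + d) + (f + x')) ∈ A
  have : y * (dv (t + d) + (f + x')) = t + (y * f + x) := by
    rw [mul_add, hdv, hx']; ring
  rwa [this]
end

section
/- Let R be an integral domain with identity elements 0 and 1, let m ∈ ℕ, and let y₁,...,y_m be a finite sequence in R such that all finite products ∏_{t∈H} y_t (over nonempty H ⊆ {1,...,m}) lie in R∖{0,1} and are pairwise distinct for distinct index sets H. If A ⊆ R is infinite, then there exists y_{m+1} ∈ A such that all finite products of y₁,...,y_{m+1} lie in R∖{0,1}, that is, FP(⟨y_t⟩_{t=1}^{m+1}) ∖ FP(⟨y_t⟩_{t=1}^m) avoids {0,1}, and the extended sequence y₁,...,y_{m+1} still has the property that ∏_{t∈H} y_t are pairwise distinct for distinct nonempty H ⊆ {1,...,m+1}. -/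
/-- Extending a finite sequence with uniqueness of finite products: if all finite products of
`y₁,…,y_m` avoid `{0,1}` and are pairwise distinct, and `A` is infinite, then some
`y_{m+1} ∈ A` extends the sequence keeping all finite products outside `{0,1}` and keeping
uniqueness of finite products. -/
theorem stmt_7 {R : Type*} [CommRing R] [IsDomain R] (m : ℕ) (y : Fin m → R)
    (hFP : ∀ H : Finset (Fin m), H.Nonempty → (∏ t ∈ H, y t) ≠ 0 ∧ (∏ t ∈ H, y t) ≠ 1)
    (hUFP : ∀ H K : Finset (Fin m), H.Nonempty → K.Nonempty →
      (∏ t ∈ H, y t) = (∏ t ∈ K, y t) → H = K)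
    (A : Set R) (hAinf : A.Infinite) :
    ∃ z ∈ A,
      (∀ H : Finset (Fin (m + 1)), H.Nonempty →
        (∏ t ∈ H, Fin.snoc y z t) ≠ 0 ∧ (∏ t ∈ H, Fin.snoc y z t) ≠ 1) ∧
      (∀ H K : Finset (Fin (m + 1)), H.Nonempty → K.Nonempty →
        (∏ t ∈ H, Fin.snoc y z t) = (∏ t ∈ K, Fin.snoc y z t) → H = K) := by
  classical
  set p : Finset (Fin m) → R := fun S => ∏ t ∈ S, y t with hp
  have hp0 : ∀ S, p S ≠ 0 := by
    intro S
    rcases S.eq_empty_or_nonempty with rfl | hS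
    · simp [p]
    · exact (hFP S hS).1
  -- the finite set of "forbidden" values
  set F : Set R := insert 1 (Set.range p) with hF
  have hFfin : F.Finite := (Set.finite_range p).insert 1
  have hbadfin : ∀ S : Finset (Fin m), ((fun z => p S * z) ⁻¹' F).Finite := by
    intro S
    exact hFfin.preimage (Set.injOn_of_injective (mul_right_injective₀ (hp0 S)))
  set bad : Set R := insert 0 (⋃ S : Finset (Fin m), (fun z => p S * z) ⁻¹' F) with hbad
  have hbadfin' : bad.Finite := ((Set.finite_iUnion hbadfin).insert 0)
  obtain ⟨z, hzA, hzbad⟩ := (hAinf.diff hbadfin').nonempty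
  have hz0 : z ≠ 0 := fun h => hzbad (by simp [hbad, h])
  have hzF : ∀ S : Finset (Fin m), p S * z ∉ F := by
    intro S hmem
    exact hzbad (Set.mem_insert_iff.mpr (Or.inr (Set.mem_iUnion.mpr ⟨S, hmem⟩)))
  have hz1 : ∀ S : Finset (Fin m), p S * z ≠ 1 := fun S h =>
    hzF S (by rw [h]; exact Set.mem_insert _ _)
  have hzp : ∀ S K : Finset (Fin m), p S * z ≠ p K := fun S K h =>
    hzF S (by rw [h]; exact Set.mem_insert_of_mem _ ⟨K, rfl⟩)
  refine ⟨z, hzA, ?_⟩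
  -- the "restriction" of a subset of Fin (m+1) to Fin m
  set c : Finset (Fin (m + 1)) → Finset (Fin m) :=
    fun H => Finset.univ.filter (fun i => i.castSucc ∈ H) with hc
  have recon : ∀ H : Finset (Fin (m + 1)),
      H = (c H).image Fin.castSucc ∪ (if Fin.last m ∈ H then {Fin.last m} else ∅) := by
    intro H
    ext j
    induction j using Fin.lastCases with
    | last =>
      by_cases h : Fin.last m ∈ H <;>
        simp [h, hc, fun i : Fin m => (Fin.castSucc_lt_last i).ne]
    | cast i =>
      by_cases h : Fin.last m ∈ H <;>
        simp [h, hc, (Fin.castSucc_lt_last i).ne, Fin.castSucc_injective m |>.eq_iff]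
  have disj : ∀ H : Finset (Fin (m + 1)),
      Disjoint ((c H).image Fin.castSucc)
        (if Fin.last m ∈ H then ({Fin.last m} : Finset (Fin (m + 1))) else ∅) := by
    intro H
    by_cases h : Fin.last m ∈ H <;> simp [h]
  have decomp : ∀ H : Finset (Fin (m + 1)),
      (∏ t ∈ H, Fin.snoc y z t) = p (c H) * (if Fin.last m ∈ H then z else 1) := by
    intro H
    conv_lhs => rw [recon H]
    rw [Finset.prod_union (disj H),
      Finset.prod_image (fun a _ b _ h => Fin.castSucc_injective m h)]
    congr 1
    · exact Finset.prod_congr rfl fun i _ => by simp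
    · by_cases h : Fin.last m ∈ H <;> simp [h]
  have cne : ∀ H : Finset (Fin (m + 1)), H.Nonempty → Fin.last m ∉ H → (c H).Nonempty := by
    intro H ⟨j, hj⟩ hlast
    induction j using Fin.lastCases with
    | last => exact absurd hj hlast
    | cast i => exact ⟨i, by simp [hc, hj]⟩
  constructor
  · intro H hH
    rw [decomp H]
    by_cases h : Fin.last m ∈ H
    · simp only [h, if_pos]
      exact ⟨mul_ne_zero (hp0 _) hz0, hz1 _⟩
    · simp only [h, if_neg, not_false_iff, mul_one]
      exact hFP _ (cne H hH h)
  · intro H K hH hK heq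
    rw [decomp H, decomp K] at heq
    by_cases h1 : Fin.last m ∈ H <;> by_cases h2 : Fin.last m ∈ K <;>
      simp only [h1, h2, if_pos, if_neg, not_false_iff, mul_one] at heq
    · -- both contain last
      have hc' : p (c H) = p (c K) := mul_right_cancel₀ hz0 heq
      have hceq : c H = c K := by
        rcases (c H).eq_empty_or_nonempty with hE | hNE
        · rcases (c K).eq_empty_or_nonempty with hE2 | hNE2
          · rw [hE, hE2]
          · exact absurd hc'.symm (by rw [hE]; simpa [p] using (hFP _ hNE2).2)
        · rcases (c K).eq_empty_or_nonempty with hE2 | hNE2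
          · exact absurd hc' (by rw [hE2]; simpa [p] using (hFP _ hNE).2)
          · exact hUFP _ _ hNE hNE2 hc'
      rw [recon H, recon K, hceq, if_pos h1, if_pos h2]
    · exact absurd heq (hzp _ _)
    · exact absurd heq.symm (hzp _ _)
    · have hceq := hUFP _ _ (cne H hH h1) (cne K hK h2) heq
      rw [recon H, recon K, hceq, if_neg h1, if_neg h2]
end

section
/- Let (S,+) be a commutative group and H a subgroup of S. Then H is an IP*-set in (S,+) if and only if H is piecewise syndetic in (S,+). -/
/-- `A` is an IP-set in `(S,+)`. -/
def IPSet {S : Type*} [AddCommMonoid S] (A : Set S) : Prop :=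
  ∃ x : ℕ → S, ∀ K : Finset ℕ, K.Nonempty → (∑ n ∈ K, x n) ∈ A

/-- `A` is an IP*-set: it meets every IP-set. -/
def IPStarSet {S : Type*} [AddCommMonoid S] (A : Set S) : Prop :=
  ∀ B : Set S, IPSet B → (A ∩ B).Nonempty

section Aux

variable {Q : Type*} [AddCommGroup Q] [Infinite Q] [DecidableEq Q]

/-- Choose an element avoiding `0` and the negatives of elements of `T`. -/
noncomputable def ipNext (T : Finset Q) : Q :=
  Classical.choose (Infinite.exists_notMem_finset (insert (0 : Q) (T.image Neg.neg)))

lemma ipNext_spec (T : Finset Q) :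
    ipNext T ∉ insert (0 : Q) (T.image Neg.neg) :=
  Classical.choose_spec (Infinite.exists_notMem_finset (insert (0 : Q) (T.image Neg.neg)))

/-- Pairs `(last chosen element, set of all nonempty finite sums so far)`. -/
noncomputable def ipP : ℕ → Q × Finset Q
  | 0 => (0, ∅)
  | n + 1 =>
    let T := (ipP n).2
    let q := ipNext T
    (q, insert q (T ∪ T.image (q + ·)))

lemma ipP_invariant (n : ℕ) :
    (0 : Q) ∉ (ipP n).2 ∧
      ∀ K : Finset ℕ, K ⊆ Finset.range n → K.Nonempty →
        (∑ k ∈ K, ((ipP (k + 1)).1 : Q)) ∈ (ipP n).2 := by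
  induction n with
  | zero =>
    refine ⟨by simp [ipP], ?_⟩
    intro K hK ⟨k, hk⟩
    simp only [Finset.range_zero, Finset.subset_empty] at hK
    simp [hK] at hk
  | succ n ih =>
    obtain ⟨h0, hsum⟩ := ih
    set T : Finset Q := (ipP n).2 with hT
    have hq := ipNext_spec (Q := Q) T
    set q := ipNext (Q := Q) T with hqdef
    have hP : ipP (n + 1) = (q, insert q (T ∪ T.image (q + ·))) := rfl
    simp only [Finset.mem_insert, Finset.mem_image, not_or, not_exists] at hq
    obtain ⟨hq0, hqneg⟩ := hq
    constructor
    · rw [hP]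
      simp only [Finset.mem_insert, Finset.mem_union, Finset.mem_image, not_or, not_exists]
      refine ⟨fun h => hq0 h.symm, h0, ?_⟩
      rintro t ⟨ht, hqt⟩
      exact hqneg t ⟨ht, neg_eq_of_add_eq_zero_left hqt⟩
    · intro K hK hKne
      by_cases hn : n ∈ K
      · have hK' : K.erase n ⊆ Finset.range n := by
          intro k hk
          have := hK (Finset.mem_of_mem_erase hk)
          simp only [Finset.mem_range, Nat.lt_succ_iff] at this
          exact Finset.mem_range.mpr (lt_of_le_of_ne this (Finset.ne_of_mem_erase hk))
        have hsplit : (∑ k ∈ K, ((ipP (k + 1)).1 : Q)) =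
            ((ipP (n + 1)).1 : Q) + ∑ k ∈ K.erase n, ((ipP (k + 1)).1 : Q) := by
          rw [← Finset.add_sum_erase _ _ hn]
        have hfst : (ipP (n + 1) : Q × Finset Q).1 = q := by rw [hP]
        rw [hP]
        simp only [Finset.mem_insert, Finset.mem_union, Finset.mem_image]
        by_cases he : (K.erase n).Nonempty
        · right; right
          exact ⟨∑ k ∈ K.erase n, ((ipP (k + 1)).1 : Q), hsum _ hK' he, by
            rw [hsplit, hfst]⟩
        · left
          rw [Finset.not_nonempty_iff_eq_empty] at he
          rw [hsplit, hfst, he, Finset.sum_empty, add_zero]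
      · have hK' : K ⊆ Finset.range n := by
          intro k hk
          have := hK hk
          simp only [Finset.mem_range, Nat.lt_succ_iff] at this
          exact Finset.mem_range.mpr (lt_of_le_of_ne this (fun h => hn (h ▸ hk)))
        rw [hP]
        simp only [Finset.mem_insert, Finset.mem_union]
        right; left
        exact hsum K hK' hKne

/-- In an infinite commutative group there is a sequence all of whose
nonempty finite sums are nonzero. -/
lemma exists_seq_sum_ne_zero :
    ∃ y : ℕ → Q, ∀ K : Finset ℕ, K.Nonempty → (∑ n ∈ K, y n) ≠ 0 := by
  refine ⟨fun n => (ipP (n + 1)).1, ?_⟩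
  intro K hKne hsum
  obtain ⟨m, hm⟩ := K.bddAbove
  have hK : K ⊆ Finset.range (m + 1) := by
    intro k hk
    exact Finset.mem_range.mpr (Nat.lt_succ_of_le (hm hk))
  obtain ⟨h0, hs⟩ := ipP_invariant (Q := Q) (m + 1)
  exact h0 (hsum ▸ hs K hK hKne)

end Aux

section Main

variable {S : Type*} [AddCommGroup S] (H : AddSubgroup S)

open QuotientAddGroup

lemma ipstar_of_finite (hfin : Finite (S ⧸ H)) : IPStarSet (H : Set S) := by
  intro B ⟨x, hx⟩
  set φ : S →+ S ⧸ H := QuotientAddGroup.mk' H with hφ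
  have : ∃ m n : ℕ, m ≠ n ∧
      φ (∑ k ∈ Finset.range m, x k) = φ (∑ k ∈ Finset.range n, x k) := by
    obtain ⟨m, n, hmn, h⟩ := Finite.exists_ne_map_eq_of_infinite
      (fun n : ℕ => φ (∑ k ∈ Finset.range n, x k))
    exact ⟨m, n, hmn, h⟩
  obtain ⟨m, n, hmn, h⟩ := this
  wlog hlt : m < n generalizing m n
  · exact this n m hmn.symm h.symm ((hmn.lt_or_gt).resolve_left hlt)
  refine ⟨∑ k ∈ Finset.Ico m n, x k, ?_, hx _ (Finset.nonempty_Ico.mpr hlt)⟩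
  have hsplit : (∑ k ∈ Finset.range n, x k) =
      (∑ k ∈ Finset.range m, x k) + ∑ k ∈ Finset.Ico m n, x k := by
    rw [← Finset.sum_range_add_sum_Ico _ hlt.le]
  have key : φ (∑ k ∈ Finset.Ico m n, x k) = 0 := by
    have h' : φ (∑ k ∈ Finset.range m, x k) + φ (∑ k ∈ Finset.Ico m n, x k)
        = φ (∑ k ∈ Finset.range m, x k) + 0 := by
      rw [← map_add, ← hsplit, add_zero]
      exact h.symm
    exact add_left_cancel h'
  rwa [hφ, QuotientAddGroup.mk'_apply, QuotientAddGroup.eq_zero_iff] at key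

lemma finite_of_ipstar (hip : IPStarSet (H : Set S)) : Finite (S ⧸ H) := by
  by_contra hinf
  rw [not_finite_iff_infinite] at hinf
  classical
  obtain ⟨y, hy⟩ := exists_seq_sum_ne_zero (Q := S ⧸ H)
  choose x hx using fun n => QuotientAddGroup.mk_surjective (s := H) (y n)
  set B : Set S := {s | ∃ K : Finset ℕ, K.Nonempty ∧ s = ∑ n ∈ K, x n} with hB
  obtain ⟨s, hsH, K, hKne, hsK⟩ := hip B ⟨x, fun K hK => ⟨K, hK, rfl⟩⟩
  have hcoe : ((s : S) : S ⧸ H) = ∑ n ∈ K, y n := by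
    rw [hsK, QuotientAddGroup.mk_sum]
    exact Finset.sum_congr rfl fun n _ => hx n
  have hzero : ((s : S) : S ⧸ H) = 0 := (QuotientAddGroup.eq_zero_iff s).mpr hsH
  exact hy K hKne (by rw [← hcoe, hzero])

lemma ps_of_finite (hfin : Finite (S ⧸ H)) : PiecewiseSyndetic (H : Set S) := by
  classical
  have := Fintype.ofFinite (S ⧸ H)
  choose σ hσ using QuotientAddGroup.mk_surjective (s := H)
  refine ⟨(Finset.univ : Finset (S ⧸ H)).image (fun q => σ (-q)), fun F => ⟨0, fun f _ => ?_⟩⟩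
  refine ⟨σ (-(f : S ⧸ H)), Finset.mem_image.mpr ⟨(f : S ⧸ H), Finset.mem_univ _, rfl⟩, ?_⟩
  show σ (-(f : S ⧸ H)) + (f + 0) ∈ H
  rw [← QuotientAddGroup.eq_zero_iff, add_zero, QuotientAddGroup.mk_add, hσ, neg_add_cancel]

lemma finite_of_ps (hps : PiecewiseSyndetic (H : Set S)) : Finite (S ⧸ H) := by
  classical
  by_contra hinf
  rw [not_finite_iff_infinite] at hinf
  obtain ⟨G, hG⟩ := hps
  obtain ⟨Fbar, hFcard⟩ := Infinite.exists_subset_card_eq (S ⧸ H) (G.card + 1)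
  choose σ hσ using QuotientAddGroup.mk_surjective (s := H)
  have hσinj : Function.Injective σ := fun a b hab => by rw [← hσ a, ← hσ b, hab]
  obtain ⟨x, hx⟩ := hG (Fbar.image σ)
  set g : S → S ⧸ H := fun t =>
    -((t : S ⧸ H)) - ((x : S) : S ⧸ H) with hg
  have hsub : Fbar ⊆ G.image g := by
    intro q hq
    obtain ⟨t, htG, htH⟩ := hx (σ q) (Finset.mem_image.mpr ⟨q, hq, rfl⟩)
    refine Finset.mem_image.mpr ⟨t, htG, ?_⟩
    have h0 : ((t + (σ q + x) : S) : S ⧸ H) = 0 := (QuotientAddGroup.eq_zero_iff _).mpr htH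
    rw [QuotientAddGroup.mk_add, QuotientAddGroup.mk_add, hσ] at h0
    have h1 : q + (((t : S) : S ⧸ H) + ((x : S) : S ⧸ H)) = 0 := by
      rw [← h0]; abel
    have h2 : q = -(((t : S) : S ⧸ H) + ((x : S) : S ⧸ H)) :=
      eq_neg_of_add_eq_zero_left h1
    rw [hg]
    simp only [h2, neg_add, sub_eq_add_neg]
  have hle := Finset.card_le_card hsub
  have h2 := Finset.card_image_le (s := G) (f := g)
  omega

end Main

/-- A subgroup of a commutative group is IP* if and only if it is piecewise syndetic. -/
theorem stmt_16 {S : Type*} [AddCommGroup S] (H : AddSubgroup S) :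
    IPStarSet (H : Set S) ↔ PiecewiseSyndetic (H : Set S) := by
  constructor
  · exact fun h => ps_of_finite H (finite_of_ipstar H h)
  · exact fun h => ipstar_of_finite H (finite_of_ps H h)
end

section
/- The set xℤ[x] of integer polynomials with zero constant term is not piecewise syndetic in the additive group (ℤ[x],+). -/
/-- The set `xℤ[x]` of integer polynomials with zero constant term is not piecewise syndetic
in `(ℤ[x],+)`. -/
theorem stmt_17 :
    ¬ PiecewiseSyndetic {f : Polynomial ℤ | f.coeff 0 = 0} := by
  rintro ⟨G, hG⟩
  obtain ⟨x, hx⟩ := hG ((Finset.range (G.card + 1)).image fun k : ℕ => Polynomial.C (k : ℤ))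
  have key : ∀ k : ℕ, ∃ t, k ≤ G.card →
      t ∈ G ∧ t.coeff 0 + ((k : ℤ) + x.coeff 0) = 0 := by
    intro k
    by_cases hk : k ≤ G.card
    · obtain ⟨t, htG, ht⟩ := hx (Polynomial.C (k : ℤ))
        (Finset.mem_image.2 ⟨k, Finset.mem_range.2 (by omega), rfl⟩)
      exact ⟨t, fun _ => ⟨htG, by simpa [Polynomial.coeff_add] using ht⟩⟩
    · exact ⟨0, fun h => absurd h hk⟩
  choose T hT using key
  have := Finset.card_le_card_of_injOn T ?_ ?_ (s := Finset.range (G.card + 1)) (t := G)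
  · simp at this
  · intro a ha
    exact (hT a (by have := Finset.mem_range.1 ha; omega)).1
  · intro a ha b hb h
    simp only [Finset.coe_range, Set.mem_Iio] at ha hb
    have h1 := (hT a (by omega)).2
    have h2 := (hT b (by omega)).2
    rw [h] at h1
    have : (a : ℤ) = b := by linarith
    exact_mod_cast this
end

section
/- Every compact Hausdorff right topological semigroup T has a smallest two-sided ideal K(T), and K(T) equals both the union of all minimal left ideals of T and the union of all minimal right ideals of T. -/
/-- `I` is a left ideal of the semigroup `T`: `T·I ⊆ I`. -/
def IsLeftIdealSG {T : Type*} [Semigroup T] (I : Set T) : Prop :=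
  I.Nonempty ∧ ∀ t : T, ∀ x ∈ I, t * x ∈ I

/-- `I` is a right ideal of the semigroup `T`: `I·T ⊆ I`. -/
def IsRightIdealSG {T : Type*} [Semigroup T] (I : Set T) : Prop :=
  I.Nonempty ∧ ∀ x ∈ I, ∀ t : T, x * t ∈ I

/-- `L` is a minimal left ideal of `T`. -/
def IsMinimalLeftIdealSG {T : Type*} [Semigroup T] (L : Set T) : Prop :=
  IsLeftIdealSG L ∧ ∀ I : Set T, IsLeftIdealSG I → I ⊆ L → I = L

/-- `R` is a minimal right ideal of `T`. -/
def IsMinimalRightIdealSG {T : Type*} [Semigroup T] (R : Set T) : Prop :=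
  IsRightIdealSG R ∧ ∀ I : Set T, IsRightIdealSG I → I ⊆ R → I = R

set_option linter.unusedSectionVars false

section Alg
variable {T : Type*} [Semigroup T]

/-- L·t is a minimal left ideal when L is. -/
lemma minLeft_mul {L : Set T} (hL : IsMinimalLeftIdealSG L) (t : T) :
    IsMinimalLeftIdealSG ((· * t) '' L) := by
  obtain ⟨⟨⟨y, hy⟩, hLmul⟩, hmin⟩ := hL
  refine ⟨⟨⟨y * t, y, hy, rfl⟩, ?_⟩, ?_⟩
  · rintro s _ ⟨x, hx, rfl⟩
    exact ⟨s * x, hLmul s x hx, mul_assoc s x t⟩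
  · rintro I ⟨⟨i, hi⟩, hImul⟩ hsub
    have hJ : {x ∈ L | x * t ∈ I} = L := by
      refine hmin _ ⟨?_, ?_⟩ fun x hx => hx.1
      · obtain ⟨x, hx, rfl⟩ := hsub hi
        exact ⟨x, hx, hi⟩
      · rintro s x ⟨hxL, hxI⟩
        exact ⟨hLmul s x hxL, by rw [mul_assoc]; exact hImul s _ hxI⟩
    refine Set.Subset.antisymm hsub ?_
    rintro _ ⟨x, hx, rfl⟩
    rw [← hJ] at hx
    exact hx.2

/-- t·R is a minimal right ideal when R is. -/
lemma minRight_mul {R : Set T} (hR : IsMinimalRightIdealSG R) (t : T) :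
    IsMinimalRightIdealSG ((t * ·) '' R) := by
  obtain ⟨⟨⟨y, hy⟩, hRmul⟩, hmin⟩ := hR
  refine ⟨⟨⟨t * y, y, hy, rfl⟩, ?_⟩, ?_⟩
  · rintro _ ⟨x, hx, rfl⟩ s
    exact ⟨x * s, hRmul x hx s, (mul_assoc t x s).symm⟩
  · rintro I ⟨⟨i, hi⟩, hImul⟩ hsub
    have hJ : {x ∈ R | t * x ∈ I} = R := by
      refine hmin _ ⟨?_, ?_⟩ fun x hx => hx.1
      · obtain ⟨x, hx, rfl⟩ := hsub hi
        exact ⟨x, hx, hi⟩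
      · rintro x ⟨hxR, hxI⟩ s
        exact ⟨hRmul x hxR s, by rw [← mul_assoc]; exact hImul _ hxI s⟩
    refine Set.Subset.antisymm hsub ?_
    rintro _ ⟨x, hx, rfl⟩
    rw [← hJ] at hx
    exact hx.2

/-- An idempotent in a minimal left ideal is a right identity on it. -/
lemma right_ident {L : Set T} (hL : IsMinimalLeftIdealSG L) {e : T} (he : e ∈ L)
    (hee : e * e = e) : ∀ x ∈ L, x * e = x := by
  obtain ⟨⟨hne, hLmul⟩, hmin⟩ := hL
  have hLe : (· * e) '' L = L := by
    refine hmin _ ⟨⟨e * e, e, he, rfl⟩, ?_⟩ ?_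
    · rintro s _ ⟨x, hx, rfl⟩
      exact ⟨s * x, hLmul s x hx, mul_assoc s x e⟩
    · rintro _ ⟨x, hx, rfl⟩
      exact hLmul x e he
  intro x hx
  rw [← hLe] at hx
  obtain ⟨z, hz, rfl⟩ := hx
  rw [mul_assoc, hee]

/-- A minimal left ideal is left simple: L·a = L for a ∈ L. -/
lemma left_simple {L : Set T} (hL : IsMinimalLeftIdealSG L) {a : T} (ha : a ∈ L) :
    ∀ z ∈ L, ∃ l ∈ L, l * a = z := by
  obtain ⟨⟨hne, hLmul⟩, hmin⟩ := hL
  have hLa : (· * a) '' L = L := by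
    refine hmin _ ⟨⟨a * a, a, ha, rfl⟩, ?_⟩ ?_
    · rintro s _ ⟨x, hx, rfl⟩
      exact ⟨s * x, hLmul s x hx, mul_assoc s x a⟩
    · rintro _ ⟨x, hx, rfl⟩
      exact hLmul x a ha
  intro z hz
  rw [← hLa] at hz
  obtain ⟨l, hl, rfl⟩ := hz
  exact ⟨l, hl, rfl⟩

/-- If e is an idempotent in a minimal left ideal, then e·T is a minimal right ideal. -/
lemma eT_minRight {L : Set T} (hL : IsMinimalLeftIdealSG L) {e : T} (he : e ∈ L)
    (hee : e * e = e) : IsMinimalRightIdealSG (Set.range (e * ·)) := by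
  have hLmul := hL.1.2
  refine ⟨⟨⟨e, e, hee⟩, ?_⟩, ?_⟩
  · rintro _ ⟨t, rfl⟩ s
    exact ⟨t * s, (mul_assoc e t s).symm⟩
  · rintro I ⟨⟨r, hr⟩, hImul⟩ hsub
    obtain ⟨t₀, ht₀⟩ := hsub hr
    have her : e * r = r := by rw [← ht₀, ← mul_assoc, hee]
    set a := r * e with ha_def
    have haL : a ∈ L := hLmul r e he
    have hea : e * a = a := by rw [ha_def, ← mul_assoc, her]
    obtain ⟨l, hlL, hla⟩ := left_simple hL haL e he
    set y := (e * l) * e with hy_def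
    have hyL : y ∈ L := hLmul (e * l) e he
    have hya : y * a = e := by
      rw [hy_def, mul_assoc, hea, mul_assoc, hla, hee]
    have hey : e * y = y := by
      rw [hy_def, ← mul_assoc, ← mul_assoc, hee]
    obtain ⟨m, hmL, hmy⟩ := left_simple hL hyL e he
    set z := (e * m) * e with hz_def
    have hzy : z * y = e := by
      rw [hz_def, mul_assoc, hey, mul_assoc, hmy, hee]
    have hze : z * e = z := right_ident hL he hee z (hLmul (e * m) e he)
    have haz : a = z := by
      calc a = e * a := hea.symm
      _ = (z * y) * a := by rw [hzy]
      _ = z * (y * a) := mul_assoc _ _ _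
      _ = z * e := by rw [hya]
      _ = z := hze
    have hay : a * y = e := by rw [haz, hzy]
    have heI : e ∈ I := by
      have : r * y = e := by
        rw [← hay, ha_def, mul_assoc, hey]
      rw [← this]
      exact hImul r hr y
    refine Set.Subset.antisymm hsub ?_
    rintro _ ⟨t, rfl⟩
    exact hImul e heI t

end Alg
section Topo
variable {T : Type*} [Semigroup T] [TopologicalSpace T] [CompactSpace T] [T2Space T] [Nonempty T]

/-- T·x is a closed left ideal. -/
lemma Tx_closed_left (hright : ∀ p : T, Continuous fun q : T => q * p) (x : T) :
    IsClosed (Set.range (· * x)) ∧ IsLeftIdealSG (Set.range (· * x)) := by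
  refine ⟨?_, ⟨x * x, x, rfl⟩, ?_⟩
  · have : IsCompact (Set.range (· * x)) := by
      rw [← Set.image_univ]
      exact isCompact_univ.image (hright x)
    exact this.isClosed
  · rintro t _ ⟨s, rfl⟩
    exact ⟨t * s, mul_assoc t s x⟩

/-- Existence of a minimal left ideal, via Zorn's lemma on closed left ideals. -/
lemma exists_minLeft (hright : ∀ p : T, Continuous fun q : T => q * p) :
    ∃ L : Set T, IsMinimalLeftIdealSG L := by
  set S : Set (Set T) := {C | IsClosed C ∧ IsLeftIdealSG C} with hS_def
  have hzorn : ∃ M, Minimal (· ∈ S) M := by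
    refine zorn_superset _ fun c hcs hc => ?_
    obtain rfl | hcnemp := c.eq_empty_or_nonempty
    · exact ⟨Set.univ, ⟨isClosed_univ, Set.univ_nonempty, fun _ _ _ => Set.mem_univ _⟩,
        fun s hs => hs.elim⟩
    refine ⟨⋂₀ c, ⟨isClosed_sInter fun t ht => (hcs ht).1, ?_, fun t x hx => ?_⟩,
      fun s hs => Set.sInter_subset_of_mem hs⟩
    · convert IsCompact.nonempty_iInter_of_directed_nonempty_isCompact_isClosed
        (ι := c) (hι := hcnemp.coe_sort) ((↑) : c → Set T) ?_ ?_ ?_ ?_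
      · exact Set.sInter_eq_iInter
      · exact DirectedOn.directed_val (IsChain.directedOn hc.symm)
      exacts [fun i => (hcs i.prop).2.1, fun i => (hcs i.prop).1.isCompact,
        fun i => (hcs i.prop).1]
    · rw [Set.mem_sInter]
      exact fun s hs => (hcs hs).2.2 t x (Set.mem_sInter.mp hx s hs)
  obtain ⟨M, hM⟩ := hzorn
  refine ⟨M, hM.prop.2, fun I hI hsub => ?_⟩
  obtain ⟨x, hx⟩ := hI.1
  have hTx := Tx_closed_left hright x
  have hTxI : Set.range (· * x) ⊆ I := by
    rintro _ ⟨t, rfl⟩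
    exact hI.2 t x hx
  have : M ⊆ Set.range (· * x) :=
    hM.2 ⟨hTx.1, hTx.2⟩ (hTxI.trans hsub)
  exact Set.Subset.antisymm hsub (this.trans hTxI)

/-- Every minimal left ideal contains an idempotent (Ellis). -/
lemma minLeft_idem (hright : ∀ p : T, Continuous fun q : T => q * p)
    {L : Set T} (hL : IsMinimalLeftIdealSG L) : ∃ e ∈ L, e * e = e := by
  obtain ⟨y, hy⟩ := hL.1.1
  have hTy : Set.range (· * y) = L := by
    refine hL.2 _ (Tx_closed_left hright y).2 ?_
    rintro _ ⟨t, rfl⟩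
    exact hL.1.2 t y hy
  have hcomp : IsCompact L := by
    rw [← hTy, ← Set.image_univ]
    exact isCompact_univ.image (hright y)
  exact exists_idempotent_in_compact_subsemigroup hright L hL.1.1 hcomp
    fun a ha b hb => hL.1.2 a b hb

end Topo

/-- Every compact Hausdorff right topological semigroup `T` has a smallest two-sided ideal
`K(T)`, which equals the union of all minimal left ideals and also the union of all minimal
right ideals. -/
theorem stmt_18 {T : Type*} [Semigroup T] [TopologicalSpace T] [CompactSpace T] [T2Space T]
    [Nonempty T] (hright : ∀ p : T, Continuous fun q : T => q * p) :
    ∃ K : Set T, IsLeftIdealSG K ∧ IsRightIdealSG K ∧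
      (∀ I : Set T, IsLeftIdealSG I → IsRightIdealSG I → K ⊆ I) ∧
      K = ⋃₀ {L : Set T | IsMinimalLeftIdealSG L} ∧
      K = ⋃₀ {R : Set T | IsMinimalRightIdealSG R} := by
  set K : Set T := ⋃₀ {L : Set T | IsMinimalLeftIdealSG L} with hK_def
  obtain ⟨L₀, hL₀⟩ := exists_minLeft hright
  obtain ⟨x₀, hx₀⟩ := hL₀.1.1
  have hKne : K.Nonempty := ⟨x₀, L₀, hL₀, hx₀⟩
  have hKleft : IsLeftIdealSG K := by
    refine ⟨hKne, ?_⟩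
    rintro t x ⟨L, hL, hxL⟩
    exact ⟨L, hL, hL.1.2 t x hxL⟩
  have hKright : IsRightIdealSG K := by
    refine ⟨hKne, ?_⟩
    rintro x ⟨L, hL, hxL⟩ t
    exact ⟨(· * t) '' L, minLeft_mul hL t, x, hxL, rfl⟩
  refine ⟨K, hKleft, hKright, ?_, rfl, ?_⟩
  · -- smallest two-sided ideal
    rintro I hIl hIr x ⟨L, hL, hxL⟩
    obtain ⟨i, hi⟩ := hIl.1
    have hIL : I ∩ L = L := by
      refine hL.2 _ ⟨⟨i * x, hIr.2 i hi x, hL.1.2 i x hxL⟩, ?_⟩ Set.inter_subset_right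
      rintro t y ⟨hyI, hyL⟩
      exact ⟨hIl.2 t y hyI, hL.1.2 t y hyL⟩
    rw [← hIL] at hxL
    exact hxL.1
  · -- K equals the union of minimal right ideals
    apply Set.Subset.antisymm
    · -- every element of K lies in a minimal right ideal
      rintro x ⟨L, hL, hxL⟩
      obtain ⟨e, heL, hee⟩ := minLeft_idem hright hL
      have heT := eT_minRight hL heL hee
      refine ⟨(x * ·) '' Set.range (e * ·), minRight_mul heT x, ?_⟩
      refine ⟨e * e, ⟨e, rfl⟩, ?_⟩
      rw [hee]
      exact right_ident hL heL hee x hxL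
    · -- every minimal right ideal is contained in K
      rintro x ⟨R, hR, hxR⟩
      obtain ⟨r, hr⟩ := hR.1.1
      obtain ⟨k, hk⟩ := hKne
      have hRK : R ∩ K = R := by
        refine hR.2 _ ⟨⟨r * k, hR.1.2 r hr k, hKleft.2 r k hk⟩, ?_⟩ Set.inter_subset_left
        rintro y ⟨hyR, hyK⟩ t
        exact ⟨hR.1.2 y hyR t, hKright.2 y hyK t⟩
      rw [← hRK] at hxR
      exact hxR.2
end

section
/- Let T be a compact Hausdorff right topological semigroup, L a minimal left ideal of T, and R a minimal right ideal of T. Then L ∩ R is a group; in particular it contains an idempotent. -/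
/-- In a compact Hausdorff right topological semigroup, the intersection of a minimal left
ideal and a minimal right ideal is a group; in particular it contains an idempotent. -/
theorem stmt_19 {T : Type*} [Semigroup T] [TopologicalSpace T] [CompactSpace T] [T2Space T]
    (hright : ∀ p : T, Continuous fun q : T => q * p)
    (L : Set T) (hL : IsLeftIdealSG L ∧ ∀ I : Set T, IsLeftIdealSG I → I ⊆ L → I = L)
    (R : Set T) (hR : IsRightIdealSG R ∧ ∀ I : Set T, IsRightIdealSG I → I ⊆ R → I = R) :
    (∀ x ∈ L ∩ R, ∀ y ∈ L ∩ R, x * y ∈ L ∩ R) ∧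
    ∃ e ∈ L ∩ R, e * e = e ∧
      (∀ x ∈ L ∩ R, e * x = x ∧ x * e = x) ∧
      (∀ x ∈ L ∩ R, ∃ y ∈ L ∩ R, x * y = e ∧ y * x = e) := by
  obtain ⟨⟨⟨aL, haL⟩, hLmul⟩, hLmin⟩ := hL
  obtain ⟨⟨⟨aR, haR⟩, hRmul⟩, hRmin⟩ := hR
  -- L · a = L for a ∈ L
  have claimL : ∀ a ∈ L, ∀ z ∈ L, ∃ t ∈ L, t * a = z := by
    intro a ha z hz
    have hS : IsLeftIdealSG {w | ∃ t ∈ L, t * a = w} := by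
      refine ⟨⟨a * a, a, ha, rfl⟩, ?_⟩
      rintro t w ⟨s, hs, rfl⟩
      exact ⟨t * s, hLmul t s hs, mul_assoc t s a⟩
    have hsub : {w | ∃ t ∈ L, t * a = w} ⊆ L := by
      rintro w ⟨t, ht, rfl⟩
      exact hLmul t a ha
    have heq := hLmin _ hS hsub
    rw [← heq] at hz
    exact hz
  -- a · R = R for a ∈ R
  have claimR : ∀ a ∈ R, ∀ z ∈ R, ∃ t ∈ R, a * t = z := by
    intro a ha z hz
    have hS : IsRightIdealSG {w | ∃ t ∈ R, a * t = w} := by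
      refine ⟨⟨a * a, a, ha, rfl⟩, ?_⟩
      rintro w ⟨s, hs, rfl⟩ t
      exact ⟨s * t, hRmul s hs t, (mul_assoc a s t).symm⟩
    have hsub : {w | ∃ t ∈ R, a * t = w} ⊆ R := by
      rintro w ⟨t, ht, rfl⟩
      exact hRmul a ha t
    have heq := hRmin _ hS hsub
    rw [← heq] at hz
    exact hz
  -- closure of L ∩ R under multiplication
  have hclosed : ∀ x ∈ L ∩ R, ∀ y ∈ L ∩ R, x * y ∈ L ∩ R := by
    rintro x ⟨hxL, hxR⟩ y ⟨hyL, hyR⟩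
    exact ⟨hLmul x y hyL, hRmul x hxR y⟩
  refine ⟨hclosed, ?_⟩
  -- the set G' = R·L
  set P : T → Prop := fun z => ∃ r ∈ R, ∃ l ∈ L, r * l = z with hP
  have hPsub : ∀ z, P z → z ∈ L ∩ R := by
    rintro z ⟨r, hr, l, hl, rfl⟩
    exact ⟨hLmul r l hl, hRmul r hr l⟩
  -- G' · a = G' for a ∈ G'
  have hGa : ∀ a, P a → ∀ g, P g → ∃ h, P h ∧ h * a = g := by
    rintro a ha g ⟨r', hr', l', hl', rfl⟩
    have haL : a ∈ L := (hPsub a ha).1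
    obtain ⟨t, ht, hta⟩ := claimL a haL l' hl'
    exact ⟨r' * t, ⟨r', hr', t, ht, rfl⟩, by rw [mul_assoc, hta]⟩
  -- a · G' = G' for a ∈ G'
  have haG : ∀ a, P a → ∀ g, P g → ∃ h, P h ∧ a * h = g := by
    rintro a ha g ⟨r', hr', l', hl', rfl⟩
    have haR : a ∈ R := (hPsub a ha).2
    obtain ⟨t, ht, hta⟩ := claimR a haR r' hr'
    exact ⟨t * l', ⟨t, ht, l', hl', rfl⟩, by rw [← mul_assoc, hta]⟩
  -- a base element of G'
  have ha0 : P (aR * aL) := ⟨aR, haR, aL, haL, rfl⟩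
  -- obtain a left identity e of G'
  obtain ⟨e, heP, hea0⟩ := hGa _ ha0 _ ha0
  have heLid : ∀ g, P g → e * g = g := by
    intro g hg
    obtain ⟨h, hh, hah⟩ := haG _ ha0 g hg
    rw [← hah, ← mul_assoc, hea0]
  have hee : e * e = e := heLid e heP
  have heL : e ∈ L := (hPsub e heP).1
  have heR : e ∈ R := (hPsub e heP).2
  -- e is a right identity on L and a left identity on R
  have hRid : ∀ z ∈ L, z * e = z := by
    intro z hz
    obtain ⟨t, ht, hte⟩ := claimL e heL z hz
    rw [← hte, mul_assoc, hee]
  have hLid : ∀ z ∈ R, e * z = z := by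
    intro z hz
    obtain ⟨t, ht, het⟩ := claimR e heR z hz
    rw [← het, ← mul_assoc, hee]
  -- every element of L ∩ R belongs to G'
  have hGP : ∀ x ∈ L ∩ R, P x := by
    rintro x ⟨hxL, hxR⟩
    exact ⟨x, hxR, e, heL, hRid x hxL⟩
  refine ⟨e, ⟨heL, heR⟩, hee, ?_, ?_⟩
  · rintro x ⟨hxL, hxR⟩
    exact ⟨hLid x hxR, hRid x hxL⟩
  · rintro x hx
    have hxP := hGP x hx
    obtain ⟨y, hyP, hyx⟩ := hGa x hxP e heP
    obtain ⟨z, hzP, hxz⟩ := haG x hxP e heP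
    have hyz : y = z := by
      have h1 : y * e = y := hRid y (hPsub y hyP).1
      have h2 : e * z = z := hLid z (hPsub z hzP).2
      calc y = y * e := h1.symm
        _ = y * (x * z) := by rw [hxz]
        _ = (y * x) * z := (mul_assoc y x z).symm
        _ = e * z := by rw [hyx]
        _ = z := h2
    exact ⟨y, hPsub y hyP, by rw [hyz]; exact hxz, hyx⟩
end
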